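/- arXiv:2409.12502 — 2 statements merged into one kernel-verified Lean document; each statement's English description precedes it below -/
import Mathlib

section
/- Let (μ_n)_{n∈ℕ} be a sequence in 𝐌 such that the Lorenz functions L_{μ_n} converge pointwise on [0,1] to a function ℓ : [0,1] → ℝ and the means m_{μ_n} converge to some α ∈ ℝ₊. Then: (1) (μ_n) has a weak limit μ_∞, a Borel probability measure on ℝ₊; (2) the mean of μ_∞ satisfies m_{μ_∞} = ℓ(1⁻) · α ≤ α < ∞, where ℓ(1⁻) denotes the left limit of ℓ at 1; (3) if m_{μ_∞} > 0, then for all x ∈ [0,1), ℓ(x) = ℓ(1⁻) · L_{μ_∞}(x). -/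
open MeasureTheory Filter Topology

noncomputable section

/-- The mean of a measure on `ℝ`. -/
def mMean (μ : Measure ℝ) : ℝ := ∫ x, x ∂μ

/-- `μ ∈ 𝐌`: a Borel probability measure on `ℝ₊` (modelled as a measure on `ℝ` giving no
mass to negative numbers) with finite nonzero mean. -/
def MemM (μ : Measure ℝ) : Prop :=
  IsProbabilityMeasure μ ∧ μ {x | x < 0} = 0 ∧ Integrable id μ ∧ 0 < mMean μ

/-- The cumulative distribution function `F_μ(x) = μ([0,x])`. -/
def cdfR (μ : Measure ℝ) (x : ℝ) : ℝ := (μ (Set.Icc 0 x)).toReal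

/-- The quantile function `Q_μ(p) = inf {x ∈ ℝ₊ : F_μ(x) ≥ p}`. -/
def quant (μ : Measure ℝ) (p : ℝ) : ℝ := sInf {x : ℝ | 0 ≤ x ∧ p ≤ cdfR μ x}

/-- The Lorenz function `L_μ(p) = (∫_0^p Q_μ(t) dt) / m_μ`. -/
def lorenz (μ : Measure ℝ) (p : ℝ) : ℝ := (∫ t in (0:ℝ)..p, quant μ t) / mMean μ

/-- The pseudo-Lorenz function `Λ_μ(p) = (∫_{[0,Q_μ(p)]} u dμ(u)) / m_μ` for `p ∈ [0,1)`,
with `Λ_μ(1) = 1`. -/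
def pseudoLorenz (μ : Measure ℝ) (p : ℝ) : ℝ :=
  if p = 1 then 1 else (∫ u in Set.Icc (0:ℝ) (quant μ p), u ∂μ) / mMean μ

/-- The Gini coefficient `G(μ) = (∫∫ |x-y| d(μ⊗μ)) / (2 m_μ)`. -/
def gini (μ : Measure ℝ) : ℝ := (∫ z : ℝ × ℝ, |z.1 - z.2| ∂(μ.prod μ)) / (2 * mMean μ)

/-- The Hoover coefficient `H(μ) = (∫ |x - m_μ| dμ) / (2 m_μ)`. -/
def hoover (μ : Measure ℝ) : ℝ := (∫ x, |x - mMean μ| ∂μ) / (2 * mMean μ)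

/-- The Wasserstein-1 distance `W₁(μ,ν) = ∫_0^1 |Q_μ - Q_ν|`. -/
def W1 (μ ν : Measure ℝ) : ℝ := ∫ t in (0:ℝ)..1, |quant μ t - quant ν t|

/-- Weak convergence of a sequence of measures: convergence of integrals of all bounded
continuous functions. -/
def WeakCv (μs : ℕ → Measure ℝ) (ν : Measure ℝ) : Prop :=
  ∀ f : ℝ → ℝ, Continuous f → (∃ C : ℝ, ∀ x, |f x| ≤ C) →
    Tendsto (fun n => ∫ x, f x ∂(μs n)) atTop (𝓝 (∫ x, f x ∂ν))

/-- Uniform integrability of a family of measures on `ℝ₊`: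
`sup_i ∫_{(α,∞)} x dμ_i(x) → 0` as `α → +∞`. -/
def UnifInt {ι : Type*} (μs : ι → Measure ℝ) : Prop :=
  ∀ ε > (0:ℝ), ∃ A : ℝ, ∀ α ≥ A, ∀ i, (∫ x in Set.Ioi α, x ∂(μs i)) ≤ ε

end

/-!
Every `μ ∈ 𝐌` is the law of its quantile function `Q_μ` under Lebesgue measure on `(0,1)`.
The primitives `ψₙ(p) = ∫₀ᵖ Q_{μₙ} = m_{μₙ} L_{μₙ}(p)` are convex (primitives of monotone
functions) and converge to `ψ = α ℓ` on `[0,1)`, so `ψ` is convex. Off the countable set where the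
one-sided derivatives of `ψ` differ, the secant slopes of `ψₙ` squeeze `Q_{μₙ}(t)` onto the right
derivative `Q(t)` of `ψ`. The limit `μ_∞` is the law of `Q`: weak convergence is dominated
convergence on `(0,1)`, Fatou gives `∫ Q ≤ α`, and dominated convergence on `[0,p]` gives
`∫₀ᵖ Q = ψ(p)` for `p < 1`. Letting `p → 1` yields `m_{μ_∞} = ℓ(1⁻) α`, and since `Q` is the
quantile function of `μ_∞` away from its countably many jumps, `L_{μ_∞} = ψ / m_{μ_∞}`.
-/

open Set ProbabilityTheory

instance : IsProbabilityMeasure (volume.restrict (Ioo (0:ℝ) 1)) :=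
  ⟨by simp⟩

lemma volume_Ioo_inter_Iic {c : ℝ} (hc : c ≤ 1) :
    volume (Ioo 0 1 ∩ Iic c) = ENNReal.ofReal c := by
  refine le_antisymm ?_ ?_
  · calc volume (Ioo 0 1 ∩ Iic c) ≤ volume (Ioc 0 c) := measure_mono fun t ht => ⟨ht.1.1, ht.2⟩
      _ = ENNReal.ofReal c := by simp
  · calc ENNReal.ofReal c = volume (Ioo 0 c) := by simp
      _ ≤ volume (Ioo 0 1 ∩ Iic c) :=
        measure_mono fun t ht => ⟨⟨ht.1, ht.2.trans_le hc⟩, ht.2.le⟩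

lemma map_Iio_zero_eq_zero {α : Type*} [MeasurableSpace α] {ν : Measure α} {f : α → ℝ}
    (hf : AEMeasurable f ν) (hf0 : 0 ≤ᵐ[ν] f) : ν.map f {x | x < 0} = 0 := by
  rw [show {x : ℝ | x < 0} = Iio 0 from rfl, Measure.map_apply_of_aemeasurable hf measurableSet_Iio]
  exact measure_mono_null (fun x hx => not_le.2 hx) (ae_iff.1 hf0)

lemma quant_nonneg (μ : Measure ℝ) (p : ℝ) : 0 ≤ quant μ p :=
  Real.sInf_nonneg fun _ hx => hx.1

section Quantile

variable {μ : Measure ℝ} [IsProbabilityMeasure μ]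

lemma cdfR_eq_cdf (hneg : μ {x | x < 0} = 0) : cdfR μ = cdf μ := by
  ext x
  have hIic : μ (Icc 0 x) = μ (Iic x) := by
    rw [← Ici_inter_Iic, inter_comm, measure_inter_conull (by rw [compl_Ici]; exact hneg)]
  rw [cdf_eq_real, measureReal_def, ← hIic, cdfR]

lemma quant_le_iff_le_cdfR (hneg : μ {x | x < 0} = 0) {p x : ℝ} (hp : p < 1) (hx : 0 ≤ x) :
    quant μ p ≤ x ↔ p ≤ cdfR μ x := by
  refine ⟨fun hq => ?_, fun hpx => csInf_le ⟨0, fun _ hy => hy.1⟩ ⟨hx, hpx⟩⟩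
  unfold quant at hq
  rw [cdfR_eq_cdf hneg] at hq ⊢
  have hne : {y : ℝ | 0 ≤ y ∧ p ≤ cdf μ y}.Nonempty := by
    obtain ⟨y, hy, hy0⟩ := (((tendsto_cdf_atTop μ).eventually (eventually_gt_nhds hp)).and
      (eventually_ge_atTop 0)).exists
    exact ⟨y, hy0, hy.le⟩
  refine ge_of_tendsto (((cdf μ).right_continuous x).mono Ioi_subset_Ici_self) ?_
  filter_upwards [self_mem_nhdsWithin] with y (hy : x < y)
  obtain ⟨z, ⟨-, hz⟩, hzy⟩ := exists_lt_of_csInf_lt hne (hq.trans_lt hy)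
  exact hz.trans ((cdf μ).mono hzy.le)

lemma le_cdfR_quant (hneg : μ {x | x < 0} = 0) {p : ℝ} (hp : p < 1) :
    p ≤ cdfR μ (quant μ p) :=
  (quant_le_iff_le_cdfR hneg hp (quant_nonneg μ p)).1 le_rfl

lemma quant_monotoneOn (hneg : μ {x | x < 0} = 0) : MonotoneOn (quant μ) (Iio 1) :=
  fun _ _ _ hq hpq => (quant_le_iff_le_cdfR hneg (hpq.trans_lt hq) (quant_nonneg μ _)).2
    (hpq.trans (le_cdfR_quant hneg hq))

lemma aemeasurable_quant (hneg : μ {x | x < 0} = 0) :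
    AEMeasurable (quant μ) (volume.restrict (Ioo 0 1)) :=
  aemeasurable_restrict_of_monotoneOn measurableSet_Ioo
    ((quant_monotoneOn hneg).mono Ioo_subset_Iio_self)

lemma map_quant (hneg : μ {x | x < 0} = 0) :
    (volume.restrict (Ioo 0 1)).map (quant μ) = μ := by
  have hmeas := aemeasurable_quant hneg
  have := Measure.isProbabilityMeasure_map (μ := volume.restrict (Ioo (0:ℝ) 1)) hmeas
  refine Measure.ext_of_Iic _ _ fun a => ?_
  rw [Measure.map_apply_of_aemeasurable hmeas measurableSet_Iic,
    Measure.restrict_apply' measurableSet_Ioo]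
  rcases lt_or_ge a 0 with ha | ha
  · rw [measure_mono_null (s := Iic a) (fun x (hx : x ≤ a) => hx.trans_lt ha) hneg]
    convert measure_empty (μ := volume)
    exact eq_empty_of_forall_notMem fun t ht => (not_le.2 ha) ((quant_nonneg μ t).trans ht.1)
  · have hpre : quant μ ⁻¹' Iic a ∩ Ioo 0 1 = Ioo 0 1 ∩ Iic (cdfR μ a) := by
      ext t
      simp only [mem_inter_iff, mem_preimage, mem_Iic, mem_Ioo]
      constructor
      · rintro ⟨hq, ht⟩; exact ⟨ht, (quant_le_iff_le_cdfR hneg ht.2 ha).1 hq⟩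
      · rintro ⟨ht, hq⟩; exact ⟨(quant_le_iff_le_cdfR hneg ht.2 ha).2 hq, ht⟩
    rw [hpre, cdfR_eq_cdf hneg, volume_Ioo_inter_Iic (cdf_le_one μ a), ofReal_cdf]

lemma integrable_quant (hneg : μ {x | x < 0} = 0) (hint : Integrable id μ) :
    Integrable (quant μ) (volume.restrict (Ioo 0 1)) := by
  rwa [← map_quant hneg, integrable_map_measure aestronglyMeasurable_id
    (aemeasurable_quant hneg)] at hint

lemma mMean_eq_integral_quant (hneg : μ {x | x < 0} = 0) :
    mMean μ = ∫ t, quant μ t ∂(volume.restrict (Ioo 0 1)) := by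
  conv_lhs => rw [mMean, ← map_quant hneg]
  exact integral_map (aemeasurable_quant hneg) aestronglyMeasurable_id

end Quantile

section QuantileOfMonotone

variable {Q : ℝ → ℝ}

lemma cdfR_map (hQ : AEMeasurable Q (volume.restrict (Ioo 0 1))) (y : ℝ) :
    cdfR ((volume.restrict (Ioo 0 1)).map Q) y = (volume (Q ⁻¹' Icc 0 y ∩ Ioo 0 1)).toReal := by
  rw [cdfR, Measure.map_apply_of_aemeasurable hQ measurableSet_Icc,
    Measure.restrict_apply' measurableSet_Ioo]

lemma quant_map_le_of_lt (hQ : MonotoneOn Q (Ioo 0 1)) (hQ0 : ∀ t ∈ Ioo 0 1, 0 ≤ Q t)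
    {p s : ℝ} (hp : p ∈ Ioo 0 1) (hs : s ∈ Ioo p 1) :
    quant ((volume.restrict (Ioo 0 1)).map Q) p ≤ Q s := by
  have hs1 : s ∈ Ioo 0 1 := ⟨hp.1.trans hs.1, hs.2⟩
  have hsub : Ioo 0 s ⊆ Q ⁻¹' Icc 0 (Q s) ∩ Ioo 0 1 := fun t ht =>
    have ht1 : t ∈ Ioo 0 1 := ⟨ht.1, ht.2.trans hs.2⟩
    ⟨⟨hQ0 t ht1, hQ ht1 hs1 ht.2.le⟩, ht1⟩
  refine csInf_le ⟨0, fun _ hy => hy.1⟩ ⟨hQ0 s hs1, hs.1.le.trans ?_⟩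
  rw [cdfR_map (aemeasurable_restrict_of_monotoneOn measurableSet_Ioo hQ),
    ← ENNReal.ofReal_le_iff_le_toReal
      ((measure_mono inter_subset_right).trans_lt measure_Ioo_lt_top).ne]
  simpa using measure_mono (μ := volume) hsub

lemma le_quant_map_of_lt (hQ : MonotoneOn Q (Ioo 0 1)) (hQ0 : ∀ t ∈ Ioo 0 1, 0 ≤ Q t)
    {p t : ℝ} (hp : p ∈ Ioo 0 1) (ht : t ∈ Ioo 0 p) :
    Q t ≤ quant ((volume.restrict (Ioo 0 1)).map Q) p := by
  have hmeas : AEMeasurable Q (volume.restrict (Ioo 0 1)) :=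
    aemeasurable_restrict_of_monotoneOn measurableSet_Ioo hQ
  have := Measure.isProbabilityMeasure_map hmeas
  have hneg := map_Iio_zero_eq_zero hmeas ((ae_restrict_iff' measurableSet_Ioo).2 (ae_of_all _ hQ0))
  set q := quant ((volume.restrict (Ioo 0 1)).map Q) p
  by_contra! hlt
  have hsub : Q ⁻¹' Icc 0 q ∩ Ioo 0 1 ⊆ Ioo 0 t := fun s ⟨hs, hs1⟩ =>
    ⟨hs1.1, lt_of_not_ge fun hts => hlt.not_ge ((hQ ⟨ht.1, ht.2.trans hp.2⟩ hs1 hts).trans hs.2)⟩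
  have hcdf : cdfR ((volume.restrict (Ioo 0 1)).map Q) q ≤ t := by
    rw [cdfR_map hmeas, ← ENNReal.toReal_ofReal ht.1.le]
    refine ENNReal.toReal_mono ENNReal.ofReal_ne_top ?_
    simpa using measure_mono (μ := volume) hsub
  linarith [le_cdfR_quant hneg hp.2, ht.2]

lemma quant_map_eq_of_continuousAt (hQ : MonotoneOn Q (Ioo 0 1))
    (hQ0 : ∀ t ∈ Ioo 0 1, 0 ≤ Q t) {p : ℝ} (hp : p ∈ Ioo 0 1) (hc : ContinuousAt Q p) :
    quant ((volume.restrict (Ioo 0 1)).map Q) p = Q p := by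
  apply le_antisymm
  · refine ge_of_tendsto (hc.tendsto.mono_left (nhdsWithin_le_nhds (s := Ioi p))) ?_
    filter_upwards [Ioo_mem_nhdsGT hp.2] with s hs using quant_map_le_of_lt hQ hQ0 hp hs
  · refine le_of_tendsto (hc.tendsto.mono_left (nhdsWithin_le_nhds (s := Iio p))) ?_
    filter_upwards [Ioo_mem_nhdsLT hp.1] with t ht using le_quant_map_of_lt hQ hQ0 hp ht

lemma quant_map_ae_eq (hQ : MonotoneOn Q (Ioo 0 1)) (hQ0 : ∀ t ∈ Ioo 0 1, 0 ≤ Q t) :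
    ∀ᵐ t ∂(volume.restrict (Ioo 0 1)), quant ((volume.restrict (Ioo 0 1)).map Q) t = Q t := by
  rw [ae_restrict_iff' measurableSet_Ioo]
  filter_upwards [hQ.countable_not_continuousWithinAt.ae_notMem volume] with t ht ht1
  refine quant_map_eq_of_continuousAt hQ hQ0 ht1 ?_
  rw [← continuousWithinAt_iff_continuousAt (Ioo_mem_nhds ht1.1 ht1.2)]
  by_contra hc
  exact ht ⟨ht1, hc⟩

lemma intervalIntegral_quant_map (hQ : MonotoneOn Q (Ioo 0 1))
    (hQ0 : ∀ t ∈ Ioo 0 1, 0 ≤ Q t) {x : ℝ} (hx : x ∈ Ico 0 1) :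
    ∫ t in 0..x, quant ((volume.restrict (Ioo 0 1)).map Q) t = ∫ t in 0..x, Q t := by
  have h := quant_map_ae_eq hQ hQ0
  rw [ae_restrict_iff' measurableSet_Ioo] at h
  refine intervalIntegral.integral_congr_ae ?_
  filter_upwards [h] with t ht htx
  rw [uIoc_of_le hx.1] at htx
  exact ht ⟨htx.1, htx.2.trans_lt hx.2⟩

end QuantileOfMonotone

section Primitive

variable {g : ℝ → ℝ} {s : Set ℝ} {a x y : ℝ}

lemma MonotoneOn.slope_primitive (hs : s.OrdConnected) (hg : MonotoneOn g s) (ha : a ∈ s)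
    (hx : x ∈ s) (hy : y ∈ s) :
    slope (fun z => ∫ t in a..z, g t) x y = (∫ t in x..y, g t) / (y - x) := by
  have hint : ∀ {b c}, b ∈ s → c ∈ s → IntervalIntegrable g volume b c := fun hb hc =>
    (hg.mono (hs.uIcc_subset hb hc)).intervalIntegrable
  rw [slope_def_field, intervalIntegral.integral_interval_sub_left (hint ha hy) (hint ha hx)]

lemma MonotoneOn.le_slope_primitive (hs : s.OrdConnected) (hg : MonotoneOn g s) (ha : a ∈ s)
    (hx : x ∈ s) (hy : y ∈ s) (hxy : x < y) :
    g x ≤ slope (fun z => ∫ t in a..z, g t) x y := by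
  rw [hg.slope_primitive hs ha hx hy, le_div_iff₀ (sub_pos.2 hxy), mul_comm, ← smul_eq_mul,
    ← intervalIntegral.integral_const]
  exact intervalIntegral.integral_mono_on hxy.le intervalIntegrable_const
    (hg.mono (hs.uIcc_subset hx hy)).intervalIntegrable fun t ht =>
      hg hx (hs.out hx hy ht) ht.1

lemma MonotoneOn.slope_primitive_le (hs : s.OrdConnected) (hg : MonotoneOn g s) (ha : a ∈ s)
    (hx : x ∈ s) (hy : y ∈ s) (hxy : x < y) :
    slope (fun z => ∫ t in a..z, g t) x y ≤ g y := by
  rw [hg.slope_primitive hs ha hx hy, div_le_iff₀ (sub_pos.2 hxy), mul_comm, ← smul_eq_mul,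
    ← intervalIntegral.integral_const]
  exact intervalIntegral.integral_mono_on hxy.le
    (hg.mono (hs.uIcc_subset hx hy)).intervalIntegrable intervalIntegrable_const fun t ht =>
      hg (hs.out hx hy ht) hy ht.2

lemma MonotoneOn.convexOn_primitive (hs : Convex ℝ s) (hg : MonotoneOn g s) (ha : a ∈ s) :
    ConvexOn ℝ s (fun z => ∫ t in a..z, g t) := by
  refine convexOn_iff_slope_mono_adjacent.2 ⟨hs, fun x y z hx hz hxy hyz => ?_⟩
  have hy : y ∈ s := hs.ordConnected.out hx hz ⟨hxy.le, hyz.le⟩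
  have h := (hg.slope_primitive_le hs.ordConnected ha hx hy hxy).trans
    (hg.le_slope_primitive hs.ordConnected ha hy hz hyz)
  rwa [slope_def_field, slope_def_field] at h

end Primitive

lemma convexOn_of_tendsto {ι E : Type*} [AddCommMonoid E] [Module ℝ E] {l : Filter ι} [l.NeBot]
    {s : Set E} {fs : ι → E → ℝ} {f : E → ℝ} (hfs : ∀ i, ConvexOn ℝ s (fs i))
    (hlim : ∀ x ∈ s, Tendsto (fun i => fs i x) l (𝓝 (f x))) : ConvexOn ℝ s f := by
  obtain ⟨i⟩ := l.nonempty_of_neBot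
  refine ⟨(hfs i).1, fun x hx y hy a b ha hb hab => ?_⟩
  refine le_of_tendsto_of_tendsto' (hlim _ ((hfs i).1 hx hy ha hb hab))
    (((hlim x hx).const_smul a).add ((hlim y hy).const_smul b)) fun j => (hfs j).2 hx hy ha hb hab

lemma tendsto_of_slope_le_of_le_slope {ι : Type*} {l : Filter ι} {f : ℝ → ℝ} {fs : ι → ℝ → ℝ}
    {gs : ι → ℝ} {s : Set ℝ} {x f' : ℝ} (hs : s ∈ 𝓝 x)
    (hlim : ∀ y ∈ s, Tendsto (fun i => fs i y) l (𝓝 (f y)))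
    (hleft : ∀ i, ∀ y ∈ s, y < x → slope (fs i) y x ≤ gs i)
    (hright : ∀ i, ∀ y ∈ s, x < y → gs i ≤ slope (fs i) x y)
    (hl : HasDerivWithinAt f f' (Iio x) x) (hr : HasDerivWithinAt f f' (Ioi x) x) :
    Tendsto gs l (𝓝 f') := by
  have hslope : ∀ y ∈ s, Tendsto (fun i => slope (fs i) x y) l (𝓝 (slope f x y)) := by
    intro y hy
    simp only [slope_def_field]
    exact ((hlim y hy).sub (hlim x (mem_of_mem_nhds hs))).div_const _
  rw [tendsto_order]
  constructor
  · intro c hc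
    obtain ⟨y, hcy, hys, hyx⟩ :=
      ((((hasDerivWithinAt_iff_tendsto_slope' self_notMem_Iio).1 hl).eventually
        (eventually_gt_nhds hc)).and
        ((show ∀ᶠ y in 𝓝[<] x, y ∈ s from mem_nhdsWithin_of_mem_nhds hs).and
          self_mem_nhdsWithin)).exists
    filter_upwards [(hslope y hys).eventually (eventually_gt_nhds hcy)] with i hi
    exact hi.trans_le (slope_comm (fs i) x y ▸ hleft i y hys hyx)
  · intro c hc
    obtain ⟨y, hcy, hys, hxy⟩ :=
      ((((hasDerivWithinAt_iff_tendsto_slope' self_notMem_Ioi).1 hr).eventually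
        (eventually_lt_nhds hc)).and
        ((show ∀ᶠ y in 𝓝[>] x, y ∈ s from mem_nhdsWithin_of_mem_nhds hs).and
          self_mem_nhdsWithin)).exists
    filter_upwards [(hslope y hys).eventually (eventually_lt_nhds hcy)] with i hi
    exact (hright i y hys hxy).trans_lt hi

lemma ConvexOn.countable_leftDeriv_ne_rightDeriv {S : Set ℝ} {f : ℝ → ℝ} (hf : ConvexOn ℝ S f) :
    {x ∈ interior S | derivWithin f (Iio x) x ≠ derivWithin f (Ioi x) x}.Countable := by
  refine hf.monotoneOn_rightDeriv.countable_not_continuousWithinAt.mono ?_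
  rintro x ⟨hx, hne⟩
  refine ⟨hx, fun hc => hne (le_antisymm (hf.leftDeriv_le_rightDeriv_of_mem_interior hx) ?_)⟩
  have hS : interior S ∈ 𝓝 x := isOpen_interior.mem_nhds hx
  refine le_of_tendsto ((hc.continuousAt hS).tendsto.mono_left (nhdsWithin_le_nhds (s := Iio x))) ?_
  filter_upwards [self_mem_nhdsWithin, mem_nhdsWithin_of_mem_nhds hS] with y (hyx : y < x) hy
  exact (hf.rightDeriv_le_slope_of_mem_interior hy (interior_subset hx) hyx).trans
    (hf.slope_le_leftDeriv_of_mem_interior (interior_subset hy) hx hyx)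

section LimitOfPrimitives

variable {gs : ℕ → ℝ → ℝ} {ψ : ℝ → ℝ}

lemma convexOn_of_tendsto_primitive (hmono : ∀ n, MonotoneOn (gs n) (Ico 0 1))
    (hlim : ∀ p ∈ Ico 0 1, Tendsto (fun n => ∫ t in 0..p, gs n t) atTop (𝓝 (ψ p))) :
    ConvexOn ℝ (Ico 0 1) ψ :=
  convexOn_of_tendsto (fun n => (hmono n).convexOn_primitive (convex_Ico 0 1) ⟨le_rfl, one_pos⟩)
    hlim

lemma rightDeriv_nonneg_of_tendsto_primitive (hmono : ∀ n, MonotoneOn (gs n) (Ico 0 1))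
    (hnonneg : ∀ n, ∀ t ∈ Ico 0 1, 0 ≤ gs n t)
    (hlim : ∀ p ∈ Ico 0 1, Tendsto (fun n => ∫ t in 0..p, gs n t) atTop (𝓝 (ψ p)))
    {p : ℝ} (hp : p ∈ Ioo 0 1) : 0 ≤ derivWithin ψ (Ioi p) p := by
  have hconv := convexOn_of_tendsto_primitive hmono hlim
  have hint : p ∈ interior (Ico 0 1) := by rwa [interior_Ico]
  have hψ0 : ψ 0 = 0 :=
    tendsto_nhds_unique (hlim 0 ⟨le_rfl, one_pos⟩) (by simp)
  have hψp : 0 ≤ ψ p := ge_of_tendsto' (hlim p (Ioo_subset_Ico_self hp)) fun n =>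
    intervalIntegral.integral_nonneg hp.1.le fun t ht => hnonneg n t ⟨ht.1, ht.2.trans_lt hp.2⟩
  calc 0 ≤ slope ψ 0 p := by
        rw [slope_def_field, hψ0, sub_zero, sub_zero]; exact div_nonneg hψp hp.1.le
    _ ≤ derivWithin ψ (Iio p) p :=
      hconv.slope_le_leftDeriv_of_mem_interior ⟨le_rfl, one_pos⟩ hint hp.1
    _ ≤ derivWithin ψ (Ioi p) p := hconv.leftDeriv_le_rightDeriv_of_mem_interior hint

lemma ae_tendsto_rightDeriv_of_tendsto_primitive (hmono : ∀ n, MonotoneOn (gs n) (Ico 0 1))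
    (hlim : ∀ p ∈ Ico 0 1, Tendsto (fun n => ∫ t in 0..p, gs n t) atTop (𝓝 (ψ p))) :
    ∀ᵐ t ∂(volume.restrict (Ioo 0 1)),
      Tendsto (fun n => gs n t) atTop (𝓝 (derivWithin ψ (Ioi t) t)) := by
  have hconv := convexOn_of_tendsto_primitive hmono hlim
  rw [ae_restrict_iff' measurableSet_Ioo]
  filter_upwards [hconv.countable_leftDeriv_ne_rightDeriv.ae_notMem volume] with t htN ht
  have hint : t ∈ interior (Ico 0 1) := by rwa [interior_Ico]
  have heq : derivWithin ψ (Iio t) t = derivWithin ψ (Ioi t) t := by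
    by_contra hne
    exact htN ⟨hint, hne⟩
  have hs : (Ico (0:ℝ) 1).OrdConnected := ordConnected_Ico
  have h0 : (0:ℝ) ∈ Ico 0 1 := ⟨le_rfl, one_pos⟩
  refine tendsto_of_slope_le_of_le_slope (Ioo_mem_nhds ht.1 ht.2)
    (fun y hy => hlim y (Ioo_subset_Ico_self hy))
    (fun n y hy hyt => (hmono n).slope_primitive_le hs h0 (Ioo_subset_Ico_self hy)
      (Ioo_subset_Ico_self ht) hyt)
    (fun n y hy hty => (hmono n).le_slope_primitive hs h0 (Ioo_subset_Ico_self ht)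
      (Ioo_subset_Ico_self hy) hty)
    (heq ▸ hconv.hasDerivWithinAt_leftDeriv_of_mem_interior hint)
    (hconv.hasDerivWithinAt_rightDeriv_of_mem_interior hint)

lemma intervalIntegral_rightDeriv_of_tendsto_primitive (hmono : ∀ n, MonotoneOn (gs n) (Ico 0 1))
    (hnonneg : ∀ n, ∀ t ∈ Ico 0 1, 0 ≤ gs n t)
    (hlim : ∀ p ∈ Ico 0 1, Tendsto (fun n => ∫ t in 0..p, gs n t) atTop (𝓝 (ψ p)))
    {p : ℝ} (hp : p ∈ Ico 0 1) : ∫ t in 0..p, derivWithin ψ (Ioi t) t = ψ p := by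
  obtain ⟨u, hpu, hu1⟩ := exists_between hp.2
  have hu : u ∈ Ico 0 1 := ⟨hp.1.trans hpu.le, hu1⟩
  have hslope : Tendsto (fun n => slope (fun z => ∫ t in 0..z, gs n t) p u) atTop
      (𝓝 (slope ψ p u)) := by
    simp only [slope_def_field]
    exact ((hlim u hu).sub (hlim p hp)).div_const _
  have hsub : uIoc 0 p ⊆ Ioo 0 1 := by
    rw [uIoc_of_le hp.1]
    exact fun t ht => ⟨ht.1, ht.2.trans_lt hp.2⟩
  have hae := ae_tendsto_rightDeriv_of_tendsto_primitive hmono hlim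
  rw [ae_restrict_iff' measurableSet_Ioo] at hae
  -- dominated convergence, with `gs n ≤ gs n p ≤ slope (∫ gs n) p u` on `[0, p]`
  refine tendsto_nhds_unique (intervalIntegral.tendsto_integral_filter_of_dominated_convergence
    (fun _ => slope ψ p u + 1) ?_ ?_ intervalIntegrable_const ?_) (hlim p hp)
  · exact Eventually.of_forall fun n => (aemeasurable_restrict_of_monotoneOn measurableSet_uIoc
      ((hmono n).mono (hsub.trans Ioo_subset_Ico_self))).aestronglyMeasurable
  · filter_upwards [hslope.eventually (eventually_lt_nhds (lt_add_one _))] with n hn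
    refine ae_of_all _ fun t ht => ?_
    have ht' : t ∈ Ico 0 1 := Ioo_subset_Ico_self (hsub ht)
    rw [Real.norm_of_nonneg (hnonneg n t ht')]
    rw [uIoc_of_le hp.1] at ht
    exact ((hmono n ht' hp ht.2).trans ((hmono n).le_slope_primitive ordConnected_Ico
      ⟨le_rfl, one_pos⟩ hp hu hpu)).trans hn.le
  · filter_upwards [hae] with t ht htp using ht (hsub htp)

end LimitOfPrimitives

section Limits

variable {α : Type*} [MeasurableSpace α] {ν : Measure α} {fs : ℕ → α → ℝ} {f : α → ℝ}

lemma integrable_and_integral_le_of_ae_tendsto {c : ℝ} (hfs : ∀ n, Integrable (fs n) ν)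
    (hnonneg : ∀ n, 0 ≤ᵐ[ν] fs n) (hlim : ∀ᵐ x ∂ν, Tendsto (fun n => fs n x) atTop (𝓝 (f x)))
    (hc : Tendsto (fun n => ∫ x, fs n x ∂ν) atTop (𝓝 c)) :
    Integrable f ν ∧ ∫ x, f x ∂ν ≤ c := by
  have hmeas : AEStronglyMeasurable f ν :=
    aestronglyMeasurable_of_tendsto_ae atTop (fun n => (hfs n).1) hlim
  have hf0 : 0 ≤ᵐ[ν] f := by
    filter_upwards [hlim, ae_all_iff.2 hnonneg] with x hx hx0 using ge_of_tendsto' hx hx0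
  have hlin : ∫⁻ x, ENNReal.ofReal (f x) ∂ν ≤ ENNReal.ofReal c :=
    calc ∫⁻ x, ENNReal.ofReal (f x) ∂ν
        = ∫⁻ x, liminf (fun n => ENNReal.ofReal (fs n x)) atTop ∂ν := by
          refine lintegral_congr_ae ?_
          filter_upwards [hlim] with x hx using ((ENNReal.tendsto_ofReal hx).liminf_eq).symm
      _ ≤ liminf (fun n => ∫⁻ x, ENNReal.ofReal (fs n x) ∂ν) atTop :=
          lintegral_liminf_le' fun n => (hfs n).1.aemeasurable.ennreal_ofReal
      _ = ENNReal.ofReal c := by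
          simp_rw [← ofReal_integral_eq_lintegral_ofReal (hfs _) (hnonneg _)]
          exact (ENNReal.tendsto_ofReal hc).liminf_eq
  have hc0 : 0 ≤ c := ge_of_tendsto' hc fun n => integral_nonneg_of_ae (hnonneg n)
  refine ⟨⟨hmeas, (hasFiniteIntegral_iff_ofReal hf0).2 (hlin.trans_lt ENNReal.ofReal_lt_top)⟩, ?_⟩
  rw [integral_eq_lintegral_of_nonneg_ae hf0 hmeas, ← ENNReal.toReal_ofReal hc0]
  exact ENNReal.toReal_mono ENNReal.ofReal_ne_top hlin

lemma weakCv_map_of_ae_tendsto [IsFiniteMeasure ν]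
    (hfs : ∀ n, AEMeasurable (fs n) ν) (hf : AEMeasurable f ν)
    (hlim : ∀ᵐ x ∂ν, Tendsto (fun n => fs n x) atTop (𝓝 (f x))) :
    WeakCv (fun n => ν.map (fs n)) (ν.map f) := by
  rintro g hg ⟨C, hC⟩
  rw [integral_map hf hg.aestronglyMeasurable]
  simp_rw [integral_map (hfs _) hg.aestronglyMeasurable]
  refine tendsto_integral_of_dominated_convergence (fun _ => C)
    (fun n => (hg.measurable.comp_aemeasurable (hfs n)).aestronglyMeasurable) (integrable_const C)
    (fun n => ae_of_all _ fun x => hC _) ?_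
  filter_upwards [hlim] with x hx using (hg.tendsto _).comp hx

end Limits

lemma leftLim_mul_eq_integral {ℓ Q : ℝ → ℝ} {α : ℝ} (hQ : IntegrableOn Q (Ioo 0 1))
    (hprim : ∀ p ∈ Ico 0 1, ∫ t in 0..p, Q t = α * ℓ p) :
    Function.leftLim ℓ 1 * α = ∫ t in Ioo 0 1, Q t := by
  have hQ' : IntegrableOn Q (uIcc 0 1) := by
    rwa [uIcc_of_le zero_le_one, integrableOn_Icc_iff_integrableOn_Ioo]
  have hcont := intervalIntegral.continuousOn_primitive_interval hQ'
  rw [uIcc_of_le zero_le_one] at hcont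
  have hT : Tendsto (fun p => α * ℓ p) (𝓝[<] 1) (𝓝 (∫ t in Ioo 0 1, Q t)) := by
    have h1 := (hcont 1 ⟨zero_le_one, le_rfl⟩).tendsto.mono_left
      (nhdsWithin_le_of_mem (mem_of_superset (Ioo_mem_nhdsLT zero_lt_one) Ioo_subset_Icc_self))
    rw [intervalIntegral.integral_of_le zero_le_one, integral_Ioc_eq_integral_Ioo] at h1
    refine h1.congr' ?_
    filter_upwards [Ioo_mem_nhdsLT zero_lt_one] with p hp using hprim p (Ioo_subset_Ico_self hp)
  rcases eq_or_ne α 0 with rfl | hα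
  -- nothing is known about `ℓ` when `α = 0`, but then both sides vanish
  · simp only [zero_mul, mul_zero] at hT ⊢
    exact tendsto_nhds_unique tendsto_const_nhds hT
  · have hℓ := hT.div_const α
    simp only [mul_div_cancel_left₀ _ hα] at hℓ
    rw [leftLim_eq_of_tendsto hℓ, div_mul_cancel₀ _ hα]

lemma exists_weakCv_of_tendsto_primitive_quant {μs : ℕ → Measure ℝ}
    [∀ n, IsProbabilityMeasure (μs n)] (hneg : ∀ n, μs n {x | x < 0} = 0)
    (hint : ∀ n, Integrable id (μs n)) {ψ : ℝ → ℝ} {α : ℝ}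
    (hlim : ∀ p ∈ Ico 0 1, Tendsto (fun n => ∫ t in 0..p, quant (μs n) t) atTop (𝓝 (ψ p)))
    (hm : Tendsto (fun n => mMean (μs n)) atTop (𝓝 α)) :
    ∃ μ' : Measure ℝ, IsProbabilityMeasure μ' ∧ μ' {x | x < 0} = 0 ∧ Integrable id μ' ∧
      WeakCv μs μ' ∧ mMean μ' ≤ α ∧ ∀ p ∈ Ico 0 1, ∫ t in 0..p, quant μ' t = ψ p := by
  have hmono (n : ℕ) : MonotoneOn (quant (μs n)) (Ico 0 1) :=
    (quant_monotoneOn (hneg n)).mono Ico_subset_Iio_self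
  have hnonneg (n : ℕ) : ∀ t ∈ Ico 0 1, 0 ≤ quant (μs n) t := fun t _ => quant_nonneg _ t
  set Q : ℝ → ℝ := fun t => derivWithin ψ (Ioi t) t
  have hQmono : MonotoneOn Q (Ioo 0 1) := by
    simpa only [interior_Ico] using (convexOn_of_tendsto_primitive hmono hlim).monotoneOn_rightDeriv
  have hQ0 : ∀ t ∈ Ioo 0 1, 0 ≤ Q t := fun t ht =>
    rightDeriv_nonneg_of_tendsto_primitive hmono hnonneg hlim ht
  have hQmeas : AEMeasurable Q (volume.restrict (Ioo 0 1)) :=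
    aemeasurable_restrict_of_monotoneOn measurableSet_Ioo hQmono
  have hae := ae_tendsto_rightDeriv_of_tendsto_primitive hmono hlim
  obtain ⟨hQint, hQle⟩ := integrable_and_integral_le_of_ae_tendsto
    (fun n => integrable_quant (hneg n) (hint n)) (fun n => ae_of_all _ fun t => quant_nonneg _ t)
    hae (hm.congr fun n => mMean_eq_integral_quant (hneg n))
  refine ⟨(volume.restrict (Ioo 0 1)).map Q, Measure.isProbabilityMeasure_map hQmeas,
    map_Iio_zero_eq_zero hQmeas ((ae_restrict_iff' measurableSet_Ioo).2 (ae_of_all _ hQ0)),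
    (integrable_map_measure aestronglyMeasurable_id hQmeas).2 hQint, ?_,
    (integral_map hQmeas aestronglyMeasurable_id).trans_le hQle, fun p hp => ?_⟩
  · convert weakCv_map_of_ae_tendsto (fun n => aemeasurable_quant (hneg n)) hQmeas hae using 1
    exact funext fun n => (map_quant (hneg n)).symm
  · rw [intervalIntegral_quant_map hQmono hQ0 hp,
      intervalIntegral_rightDeriv_of_tendsto_primitive hmono hnonneg hlim hp]

theorem weak_limit_of_lorenz_pointwise_and_mean_general (μs : ℕ → Measure ℝ)
    (h : ∀ n, MemM (μs n)) (ℓ : ℝ → ℝ) (α : ℝ)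
    (hL : ∀ x ∈ Set.Icc (0:ℝ) 1, Tendsto (fun n => lorenz (μs n) x) atTop (𝓝 (ℓ x)))
    (hm : Tendsto (fun n => mMean (μs n)) atTop (𝓝 α)) :
    ∃ μ' : Measure ℝ, IsProbabilityMeasure μ' ∧ μ' {x | x < 0} = 0 ∧ Integrable id μ' ∧
      WeakCv μs μ' ∧
      mMean μ' = Function.leftLim ℓ 1 * α ∧ Function.leftLim ℓ 1 * α ≤ α ∧
      (0 < mMean μ' → ∀ x ∈ Set.Ico (0:ℝ) 1, ℓ x = Function.leftLim ℓ 1 * lorenz μ' x) := by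
  have (n : ℕ) : IsProbabilityMeasure (μs n) := (h n).1
  have hlim : ∀ p ∈ Ico 0 1,
      Tendsto (fun n => ∫ t in 0..p, quant (μs n) t) atTop (𝓝 (α * ℓ p)) := fun p hp =>
    (hm.mul (hL p (Ico_subset_Icc_self hp))).congr fun n => by
      rw [lorenz, mul_div_cancel₀ _ (h n).2.2.2.ne']
  obtain ⟨μ', hprob, hneg, hint, hweak, hle, hprim⟩ :=
    exists_weakCv_of_tendsto_primitive_quant (fun n => (h n).2.1) (fun n => (h n).2.2.1) hlim hm
  have hmean : mMean μ' = Function.leftLim ℓ 1 * α := by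
    rw [leftLim_mul_eq_integral (integrable_quant hneg hint) hprim, mMean_eq_integral_quant hneg]
  refine ⟨μ', hprob, hneg, hint, hweak, hmean, hmean ▸ hle, fun hpos x hx => ?_⟩
  rw [hmean] at hpos
  rw [lorenz, hprim x hx, hmean, ← mul_div_assoc, ← mul_assoc, mul_div_cancel_left₀ _ hpos.ne']

/-- If the Lorenz functions of `μ_n ∈ 𝐌` converge pointwise on `[0,1]`
to `ℓ` and the means converge to `α ∈ ℝ₊`, then the `μ_n` converge weakly to a Borel
probability measure `μ_∞` on `ℝ₊` with mean `ℓ(1⁻)·α ≤ α < ∞`, and if this mean is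
positive then `ℓ(x) = ℓ(1⁻)·L_{μ_∞}(x)` for all `x ∈ [0,1)`. -/
theorem weak_limit_of_lorenz_pointwise_and_mean (μs : ℕ → Measure ℝ)
    (h : ∀ n, MemM (μs n)) (ℓ : ℝ → ℝ) (α : ℝ) (hα : 0 ≤ α)
    (hL : ∀ x ∈ Set.Icc (0:ℝ) 1, Tendsto (fun n => lorenz (μs n) x) atTop (𝓝 (ℓ x)))
    (hm : Tendsto (fun n => mMean (μs n)) atTop (𝓝 α)) :
    ∃ μ' : Measure ℝ, IsProbabilityMeasure μ' ∧ μ' {x | x < 0} = 0 ∧ Integrable id μ' ∧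
      WeakCv μs μ' ∧
      mMean μ' = Function.leftLim ℓ 1 * α ∧ Function.leftLim ℓ 1 * α ≤ α ∧
      (0 < mMean μ' → ∀ x ∈ Set.Ico (0:ℝ) 1, ℓ x = Function.leftLim ℓ 1 * lorenz μ' x) :=
  weak_limit_of_lorenz_pointwise_and_mean_general μs h ℓ α hL hm
end

section
/- Let (μ_i)_{i∈I} be a family of measures in 𝐌 with means m_i and Lorenz functions L_i. Then: (1) if sup_{i∈I} m_i < ∞ and the pointwise liminf function x ↦ liminf_{i} L_i(x) (liminf taken along the cofinite filter on I) tends to 1 as x → 1⁻, then the family (μ_i)_{i∈I} is uniformly integrable; (2) if (μ_i)_{i∈I} is uniformly integrable and inf_{i∈I} m_i > 0, then the pointwise infimum function x ↦ inf_{i∈I} L_i(x) tends to 1 as x → 1⁻. -/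
open MeasureTheory Filter Topology

/-!
The quantile function `Q = quant μ` pushes the uniform law on `(0,1)` forward to `μ`. Hence
`m (1 - L(x)) = ∫_x^1 Q` and the tail mean `∫_{(α,∞)} y dμ` equals `∫_{F(α)}^1 Q`. Comparing these
integrals gives, for `x ∈ [0,1]`:
* `∫_{(α,∞)} y dμ ≤ m (1 - L(x))` once `F(α) ≥ x`, which Markov's inequality guarantees for
  `α ≥ m / (1 - x)`;
* `m (1 - L(x)) ≤ α (1 - x) + ∫_{(α,∞)} y dμ` for `α ≥ 0`, since `Q ≤ α` below `F(α)`.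
For (1) the first bound controls the tails of all but finitely many `μ_i`, and each of the finitely
many others is integrable. For (2) the second bound holds uniformly in `i`.
-/

open Set ProbabilityTheory

lemma cdfR_nonneg (μ : Measure ℝ) (a : ℝ) : 0 ≤ cdfR μ a := ENNReal.toReal_nonneg

lemma cdfR_of_neg (μ : Measure ℝ) {a : ℝ} (ha : a < 0) : cdfR μ a = 0 := by
  simp [cdfR, Icc_eq_empty_of_lt ha]

lemma volume_Iic_inter_Ioo {c : ℝ} (hc : c ≤ 1) :
    volume (Iic c ∩ Ioo 0 1) = ENNReal.ofReal c := by
  refine le_antisymm ?_ ?_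
  · calc volume (Iic c ∩ Ioo 0 1) ≤ volume (Ioc 0 c) :=
          measure_mono fun t ht ↦ ⟨ht.2.1, ht.1⟩
      _ = ENNReal.ofReal c := by simp
  · calc ENNReal.ofReal c = volume (Ioo 0 c) := by simp
      _ ≤ volume (Iic c ∩ Ioo 0 1) :=
          measure_mono fun t ht ↦ ⟨ht.2.le, ht.1, ht.2.trans_le hc⟩

lemma tendsto_setIntegral_Ioi_atTop {E : Type*} [NormedAddCommGroup E] [NormedSpace ℝ E]
    {μ : Measure ℝ} {f : ℝ → E} (hf : Integrable f μ) :
    Tendsto (fun a ↦ ∫ x in Ioi a, f x ∂μ) atTop (𝓝 0) := by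
  have h := tendsto_setIntegral_of_antitone (μ := μ) (f := f) (fun a ↦ measurableSet_Ioi)
    (fun _ _ hab ↦ Ioi_subset_Ioi hab) ⟨0, hf.integrableOn⟩
  have hempty : ⋂ a : ℝ, Ioi a = ∅ :=
    eq_empty_of_forall_notMem fun x hx ↦ lt_irrefl x (mem_iInter.1 hx x)
  rwa [hempty, setIntegral_empty] at h

namespace MemM

variable {μ : Measure ℝ}

lemma ae_nonneg (hμ : MemM μ) : ∀ᵐ x ∂μ, 0 ≤ x := by
  simpa [ae_iff] using hμ.2.1

lemma cdfR_eq_cdf (hμ : MemM μ) : cdfR μ = cdf μ := by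
  have := hμ.1
  ext a
  have hae : Icc 0 a =ᵐ[μ] Iic a := by
    filter_upwards [hμ.ae_nonneg] with x hx
    exact propext ⟨And.right, And.intro hx⟩
  rw [cdfR, cdf_eq_real, measureReal_def, measure_congr hae]

lemma monotone_cdfR (hμ : MemM μ) : Monotone (cdfR μ) :=
  hμ.cdfR_eq_cdf ▸ monotone_cdf μ

lemma cdfR_le_one (hμ : MemM μ) (a : ℝ) : cdfR μ a ≤ 1 :=
  hμ.cdfR_eq_cdf ▸ cdf_le_one μ a

lemma exists_le_cdfR (hμ : MemM μ) {t : ℝ} (ht : t < 1) : ∃ a, 0 ≤ a ∧ t ≤ cdfR μ a := by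
  rw [hμ.cdfR_eq_cdf]
  obtain ⟨a, hta, ha⟩ :=
    (((tendsto_cdf_atTop μ).eventually (lt_mem_nhds ht)).and (eventually_ge_atTop 0)).exists
  exact ⟨a, ha, hta.le⟩

lemma quant_le_iff (hμ : MemM μ) {t : ℝ} (ht : t ∈ Ioo 0 1) {a : ℝ} :
    quant μ t ≤ a ↔ t ≤ cdfR μ a := by
  have hne := hμ.exists_le_cdfR ht.2
  constructor
  · intro h
    refine le_trans ?_ (hμ.monotone_cdfR h)
    have hright : ∀ y > quant μ t, t ≤ cdfR μ y := fun y hy ↦ by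
      obtain ⟨x, hx, hxy⟩ := exists_lt_of_csInf_lt hne hy
      exact hx.2.trans (hμ.monotone_cdfR hxy.le)
    rw [hμ.cdfR_eq_cdf] at hright ⊢
    exact ge_of_tendsto (((cdf μ).right_continuous _).mono Ioi_subset_Ici_self)
      (eventually_nhdsWithin_of_forall hright)
  · intro h
    have ha : 0 ≤ a := by
      by_contra! ha
      linarith [cdfR_of_neg μ ha, ht.1]
    exact csInf_le ⟨0, fun _ hx ↦ hx.1⟩ ⟨ha, h⟩

lemma quant_preimage_Iic (hμ : MemM μ) (a : ℝ) :
    quant μ ⁻¹' Iic a ∩ Ioo 0 1 = Iic (cdfR μ a) ∩ Ioo 0 1 := by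
  ext t
  exact and_congr_left fun ht ↦ hμ.quant_le_iff ht

lemma quant_preimage_Ioi (hμ : MemM μ) (a : ℝ) :
    quant μ ⁻¹' Ioi a ∩ Ioo 0 1 = Ioo (cdfR μ a) 1 := by
  ext t
  simp only [mem_inter_iff, mem_preimage, mem_Ioi, mem_Ioo]
  constructor
  · rintro ⟨hta, ht⟩
    exact ⟨lt_of_not_ge fun h ↦ hta.not_ge ((hμ.quant_le_iff ht).2 h), ht.2⟩
  · rintro ⟨hat, ht1⟩
    have ht : t ∈ Ioo 0 1 := ⟨(cdfR_nonneg μ a).trans_lt hat, ht1⟩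
    exact ⟨lt_of_not_ge fun h ↦ hat.not_ge ((hμ.quant_le_iff ht).1 h), ht⟩

lemma quant_mono (hμ : MemM μ) : MonotoneOn (quant μ) (Iio 1) := fun _ _ _ hs hts ↦
  csInf_le_csInf ⟨0, fun _ hx ↦ hx.1⟩ (hμ.exists_le_cdfR hs) fun _ hx ↦ ⟨hx.1, hts.trans hx.2⟩

lemma aemeasurable_quant (hμ : MemM μ) : AEMeasurable (quant μ) (volume.restrict (Ioo 0 1)) :=
  aemeasurable_restrict_of_monotoneOn measurableSet_Ioo (hμ.quant_mono.mono fun _ ht ↦ ht.2)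

lemma map_quant (hμ : MemM μ) : (volume.restrict (Ioo 0 1)).map (quant μ) = μ := by
  have := hμ.1
  refine Measure.ext_of_Iic _ _ fun a ↦ ?_
  rw [Measure.map_apply_of_aemeasurable hμ.aemeasurable_quant measurableSet_Iic,
    Measure.restrict_apply₀ (hμ.aemeasurable_quant.nullMeasurable measurableSet_Iic),
    hμ.quant_preimage_Iic, hμ.cdfR_eq_cdf, volume_Iic_inter_Ioo (cdf_le_one μ a), ofReal_cdf]

lemma integrableOn_quant (hμ : MemM μ) : IntegrableOn (quant μ) (Ioo 0 1) := by
  have h := hμ.2.2.1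
  rwa [← hμ.map_quant, integrable_map_measure aestronglyMeasurable_id hμ.aemeasurable_quant] at h

lemma intervalIntegrable_quant (hμ : MemM μ) {a b : ℝ} (ha : a ∈ Icc 0 1) (hb : b ∈ Icc 0 1) :
    IntervalIntegrable (quant μ) volume a b := by
  rw [← uIcc_of_le zero_le_one] at ha hb
  exact ((intervalIntegrable_iff_integrableOn_Ioo_of_le zero_le_one).2
    hμ.integrableOn_quant).mono_set (uIcc_subset_uIcc ha hb)

lemma integral_quant (hμ : MemM μ) : ∫ t in 0..1, quant μ t = mMean μ := by
  have h := integral_map (f := fun x ↦ x) hμ.aemeasurable_quant aestronglyMeasurable_id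
  rw [hμ.map_quant] at h
  rw [intervalIntegral.integral_of_le zero_le_one, integral_Ioc_eq_integral_Ioo, mMean, h]

lemma setIntegral_Ioi_eq_integral_quant (hμ : MemM μ) (a : ℝ) :
    ∫ x in Ioi a, x ∂μ = ∫ t in cdfR μ a..1, quant μ t := by
  conv_lhs => rw [← hμ.map_quant]
  rw [setIntegral_map (f := fun x ↦ x) measurableSet_Ioi aestronglyMeasurable_id
      hμ.aemeasurable_quant,
    Measure.restrict_restrict' measurableSet_Ioo, hμ.quant_preimage_Ioi,
    intervalIntegral.integral_of_le (hμ.cdfR_le_one a), integral_Ioc_eq_integral_Ioo]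

lemma mMean_mul_one_sub_lorenz (hμ : MemM μ) {x : ℝ} (hx : x ∈ Icc 0 1) :
    mMean μ * (1 - lorenz μ x) = ∫ t in x..1, quant μ t := by
  have h0 : (0 : ℝ) ∈ Icc 0 1 := left_mem_Icc.2 zero_le_one
  have h1 : (1 : ℝ) ∈ Icc 0 1 := right_mem_Icc.2 zero_le_one
  rw [← intervalIntegral.integral_interval_sub_left (hμ.intervalIntegrable_quant h0 h1)
    (hμ.intervalIntegrable_quant h0 hx), hμ.integral_quant,
    lorenz, mul_sub, mul_one, mul_div_cancel₀ _ hμ.2.2.2.ne']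

lemma lorenz_nonneg (hμ : MemM μ) {x : ℝ} (hx : 0 ≤ x) : 0 ≤ lorenz μ x :=
  div_nonneg (intervalIntegral.integral_nonneg hx fun t _ ↦ quant_nonneg μ t) hμ.2.2.2.le

lemma lorenz_le_one (hμ : MemM μ) {x : ℝ} (hx : x ∈ Icc 0 1) : lorenz μ x ≤ 1 := by
  have h : 0 ≤ mMean μ * (1 - lorenz μ x) := by
    rw [hμ.mMean_mul_one_sub_lorenz hx]
    exact intervalIntegral.integral_nonneg hx.2 fun t _ ↦ quant_nonneg μ t
  exact sub_nonneg.1 (nonneg_of_mul_nonneg_right h hμ.2.2.2)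

lemma one_sub_mMean_div_le_cdfR (hμ : MemM μ) {a : ℝ} (ha : 0 < a) :
    1 - mMean μ / a ≤ cdfR μ a := by
  have := hμ.1
  have hmarkov : a * μ.real {x | a ≤ x} ≤ mMean μ :=
    mul_meas_ge_le_integral_of_nonneg hμ.ae_nonneg hμ.2.2.1 a
  have htail : μ.real (Ioi a) ≤ mMean μ / a := by
    rw [le_div_iff₀ ha, mul_comm]
    have hsub : μ.real (Ioi a) ≤ μ.real {x | a ≤ x} :=
      measureReal_mono fun x (hx : a < x) ↦ show a ≤ x from hx.le
    exact (mul_le_mul_of_nonneg_left hsub ha.le).trans hmarkov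
  rw [hμ.cdfR_eq_cdf, cdf_eq_real, ← compl_Ioi, probReal_compl_eq_one_sub measurableSet_Ioi]
  linarith

lemma setIntegral_Ioi_le_of_le_cdfR (hμ : MemM μ) {x a : ℝ} (hx : x ∈ Icc 0 1)
    (hxa : x ≤ cdfR μ a) : ∫ y in Ioi a, y ∂μ ≤ mMean μ * (1 - lorenz μ x) := by
  rw [hμ.setIntegral_Ioi_eq_integral_quant, hμ.mMean_mul_one_sub_lorenz hx]
  exact intervalIntegral.integral_mono_interval hxa (hμ.cdfR_le_one a) le_rfl
    (ae_of_all _ fun t ↦ quant_nonneg μ t)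
    (hμ.intervalIntegrable_quant hx (right_mem_Icc.2 zero_le_one))

lemma setIntegral_Ioi_le_of_mMean_div_le (hμ : MemM μ) {x a : ℝ} (hx : x ∈ Ico 0 1)
    (ha : mMean μ / (1 - x) ≤ a) : ∫ y in Ioi a, y ∂μ ≤ mMean μ * (1 - lorenz μ x) := by
  have hx1 : 0 < 1 - x := sub_pos.2 hx.2
  have ha0 : 0 < a := (div_pos hμ.2.2.2 hx1).trans_le ha
  refine hμ.setIntegral_Ioi_le_of_le_cdfR (Ico_subset_Icc_self hx) ?_
  have : mMean μ / a ≤ 1 - x := by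
    rw [div_le_iff₀ ha0, mul_comm]
    exact (div_le_iff₀ hx1).1 ha
  linarith [hμ.one_sub_mMean_div_le_cdfR ha0]

lemma mMean_mul_one_sub_lorenz_le (hμ : MemM μ) {x a : ℝ} (hx : x ∈ Icc 0 1) (ha : 0 ≤ a) :
    mMean μ * (1 - lorenz μ x) ≤ a * (1 - x) + ∫ y in Ioi a, y ∂μ := by
  rw [hμ.mMean_mul_one_sub_lorenz hx, hμ.setIntegral_Ioi_eq_integral_quant]
  set c := cdfR μ a
  set y := max x c
  have hc : c ∈ Icc 0 1 := ⟨cdfR_nonneg μ a, hμ.cdfR_le_one a⟩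
  have hy : y ∈ Icc 0 1 := ⟨hx.1.trans (le_max_left _ _), max_le hx.2 hc.2⟩
  have h1 : (1 : ℝ) ∈ Icc 0 1 := right_mem_Icc.2 zero_le_one
  have hbelow : ∫ t in x..y, quant μ t ≤ a * (1 - x) := by
    calc ∫ t in x..y, quant μ t ≤ ∫ _ in x..y, a := by
          refine intervalIntegral.integral_mono_on_of_le_Ioo (le_max_left _ _)
            (hμ.intervalIntegrable_quant hx hy) intervalIntegrable_const fun t ht ↦ ?_
          have htc : t ≤ c := ((lt_max_iff.1 ht.2).resolve_left ht.1.not_gt).le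
          exact (hμ.quant_le_iff ⟨hx.1.trans_lt ht.1, ht.2.trans_le hy.2⟩).2 htc
      _ = a * (y - x) := by rw [intervalIntegral.integral_const, smul_eq_mul, mul_comm]
      _ ≤ a * (1 - x) := by gcongr; exact hy.2
  have habove : ∫ t in y..1, quant μ t ≤ ∫ t in c..1, quant μ t :=
    intervalIntegral.integral_mono_interval (le_max_right _ _) hy.2 le_rfl
      (ae_of_all _ fun t ↦ quant_nonneg μ t) (hμ.intervalIntegrable_quant hc h1)
  rw [← intervalIntegral.integral_add_adjacent_intervals (hμ.intervalIntegrable_quant hx hy)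
    (hμ.intervalIntegrable_quant hy h1)]
  linarith

end MemM

lemma unifInt_of_tendsto_liminf_lorenz {ι : Type*} [Nonempty ι] {μs : ι → Measure ℝ}
    (h : ∀ i, MemM (μs i)) {C : ℝ} (hC : ∀ i, mMean (μs i) ≤ C)
    (hlim : Tendsto (fun x ↦ liminf (fun i ↦ lorenz (μs i) x) cofinite) (𝓝[<] 1) (𝓝 1)) :
    UnifInt μs := by
  intro ε hε
  obtain ⟨i₀⟩ := ‹Nonempty ι›
  have hC0 : 0 < C := (h i₀).2.2.2.trans_le (hC i₀)
  set η := ε / C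
  obtain ⟨x, hxL, hx⟩ := ((hlim.eventually (lt_mem_nhds (sub_lt_self 1 (div_pos hε hC0)))).and
    (Ico_mem_nhdsLT zero_lt_one)).exists
  have hcofin : ∀ᶠ i in cofinite, 1 - η < lorenz (μs i) x :=
    eventually_lt_of_lt_liminf hxL
      ⟨0, eventually_map.2 (.of_forall fun i ↦ (h i).lorenz_nonneg hx.1)⟩
  refine eventually_atTop.1 ?_
  filter_upwards [(eventually_all_finite (eventually_cofinite.1 hcofin)).2 fun i _ ↦
      (tendsto_setIntegral_Ioi_atTop (h i).2.2.1).eventually (ge_mem_nhds hε),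
    eventually_ge_atTop (C / (1 - x))] with a hexceptional ha i
  by_cases hi : 1 - η < lorenz (μs i) x
  · have hai : mMean (μs i) / (1 - x) ≤ a :=
      (div_le_div_of_nonneg_right (hC i) (sub_pos.2 hx.2).le).trans ha
    calc ∫ y in Ioi a, y ∂μs i ≤ mMean (μs i) * (1 - lorenz (μs i) x) :=
          (h i).setIntegral_Ioi_le_of_mMean_div_le hx hai
      _ ≤ C * η := mul_le_mul (hC i) (by linarith)
          (sub_nonneg.2 ((h i).lorenz_le_one (Ico_subset_Icc_self hx))) hC0.le
      _ = ε := mul_div_cancel₀ ε hC0.ne'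
  · exact hexceptional i hi

lemma tendsto_iInf_lorenz_of_unifInt {ι : Type*} [Nonempty ι] {μs : ι → Measure ℝ}
    (h : ∀ i, MemM (μs i)) (hui : UnifInt μs) {c : ℝ} (hc0 : 0 < c)
    (hc : ∀ i, c ≤ mMean (μs i)) :
    Tendsto (fun x ↦ ⨅ i, lorenz (μs i) x) (𝓝[<] 1) (𝓝 1) := by
  have hIco : Ico (0 : ℝ) 1 ∈ 𝓝[<] (1 : ℝ) := Ico_mem_nhdsLT zero_lt_one
  refine tendsto_order.2 ⟨fun b hb ↦ ?_, fun b hb ↦ ?_⟩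
  · set e := 1 - b
    have he : 0 < e := sub_pos.2 hb
    obtain ⟨A, hA⟩ := hui (c * e / 4) (by positivity)
    set a := max A 0
    have hlin : Tendsto (fun x : ℝ ↦ a * (1 - x)) (𝓝[<] 1) (𝓝 0) :=
      ((continuous_const.mul (continuous_const.sub continuous_id)).tendsto' 1 0
        (by simp)).mono_left nhdsWithin_le_nhds
    filter_upwards [hIco, hlin.eventually (gt_mem_nhds (by positivity : 0 < c * e / 4))]
      with x hx hax
    have hL : ∀ i, 1 - e / 2 ≤ lorenz (μs i) x := fun i ↦ by
      have hbound := (h i).mMean_mul_one_sub_lorenz_le (Ico_subset_Icc_self hx) (le_max_right A 0)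
      have htail := hA a (le_max_left A 0) i
      have : mMean (μs i) * (1 - lorenz (μs i) x) ≤ mMean (μs i) * (e / 2) := by
        nlinarith [hc i]
      linarith [le_of_mul_le_mul_left this (h i).2.2.2]
    linarith [le_ciInf hL]
  · obtain ⟨i₀⟩ := ‹Nonempty ι›
    filter_upwards [hIco] with x hx
    have hbdd : BddBelow (range fun i ↦ lorenz (μs i) x) :=
      ⟨0, forall_mem_range.2 fun i ↦ (h i).lorenz_nonneg hx.1⟩
    exact (ciInf_le hbdd i₀).trans_lt
      (((h i₀).lorenz_le_one (Ico_subset_Icc_self hx)).trans_lt hb)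

/-- (1) If the means are uniformly bounded and the pointwise liminf
(along the cofinite filter) of the Lorenz functions tends to `1` as `x → 1⁻`, then the
family is uniformly integrable. (2) If the family is uniformly integrable and the means
are bounded away from `0`, then the pointwise infimum of the Lorenz functions tends to
`1` as `x → 1⁻`. -/
theorem unifInt_iff_lorenz_near_one {ι : Type*} [Nonempty ι]
    (μs : ι → Measure ℝ) (h : ∀ i, MemM (μs i)) :
    ((∃ C : ℝ, ∀ i, mMean (μs i) ≤ C) →
      Tendsto (fun x => Filter.liminf (fun i => lorenz (μs i) x) Filter.cofinite)
        (𝓝[<] (1:ℝ)) (𝓝 1) →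
      UnifInt μs) ∧
    (UnifInt μs → (∃ c : ℝ, 0 < c ∧ ∀ i, c ≤ mMean (μs i)) →
      Tendsto (fun x => ⨅ i, lorenz (μs i) x) (𝓝[<] (1:ℝ)) (𝓝 1)) :=
  ⟨fun ⟨_, hC⟩ hlim ↦ unifInt_of_tendsto_liminf_lorenz h hC hlim,
    fun hui ⟨_, hc0, hc⟩ ↦ tendsto_iInf_lorenz_of_unifInt h hui hc0 hc⟩
end
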